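/- Let Γ = (V,E) be a reduced finite simple graph which contains no triangles and no cycles of length six, and assume additionally that there are no vertices u,v ∈ V with N(u) strictly contained in N(v). Then Aut^π(Γ) = Aut(Γ²). -/

import Mathlib

open SimpleGraph

/-- A graph is reduced (vertex determining) if distinct vertices have distinct
open neighborhoods. -/
def Reduced {V : Type*} (G : SimpleGraph V) : Prop :=
  ∀ u v : V, G.neighborSet u = G.neighborSet v → u = v

/-- The group of two-fold projections of a graph: permutations mapping every
open neighborhood onto some open neighborhood. -/
def autPi {V : Type*} [Fintype V] (G : SimpleGraph V) : Subgroup (Equiv.Perm V) where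
  carrier := {π : Equiv.Perm V | ∀ v : V, ∃ w : V, π '' G.neighborSet v = G.neighborSet w}
  one_mem' := by
    intro v
    exact ⟨v, by simp⟩
  mul_mem' := by
    intro a b ha hb v
    obtain ⟨w, hw⟩ := hb v
    obtain ⟨u, hu⟩ := ha w
    refine ⟨u, ?_⟩
    rw [Equiv.Perm.coe_mul, Set.image_comp, hw, hu]
  inv_mem' := by
    intro a ha v
    have hfin : (Set.range G.neighborSet).Finite := Set.finite_range _
    have hmaps : Set.MapsTo (Set.image ⇑a) (Set.range G.neighborSet)
        (Set.range G.neighborSet) := by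
      rintro s ⟨u, rfl⟩
      obtain ⟨w, hw⟩ := ha u
      exact ⟨w, hw.symm⟩
    have hinj : Set.InjOn (Set.image ⇑a) (Set.range G.neighborSet) :=
      (Set.image_injective.mpr a.injective).injOn
    have hbij := (hfin.injOn_iff_bijOn_of_mapsTo hmaps).mp hinj
    obtain ⟨s, hs, hsv⟩ := hbij.surjOn ⟨v, rfl⟩
    obtain ⟨w, rfl⟩ := hs
    refine ⟨w, ?_⟩
    have : (⇑a⁻¹) '' ((⇑a) '' G.neighborSet w) = G.neighborSet w := by
      rw [← Set.image_comp]
      simp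
    rw [← this, hsv]

/-- The automorphism group of a graph, as a subgroup of the permutations of its vertices. -/
def autG {V : Type*} [Fintype V] (G : SimpleGraph V) : Subgroup (Equiv.Perm V) where
  carrier := {π : Equiv.Perm V | ∀ v w : V, G.Adj (π v) (π w) ↔ G.Adj v w}
  one_mem' := by intro v w; rfl
  mul_mem' := by
    intro a b ha hb v w
    rw [Equiv.Perm.coe_mul, Function.comp_apply, Function.comp_apply, ha, hb]
  inv_mem' := by
    intro a ha v w
    conv_rhs => rw [← (show a (a⁻¹ v) = v from a.apply_symm_apply v), ← (show a (a⁻¹ w) = w from a.apply_symm_apply w)]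
    rw [ha]

/-- The square of a graph: distinct vertices are adjacent iff they have a common neighbor. -/
def square {V : Type*} (G : SimpleGraph V) : SimpleGraph V where
  Adj v w := v ≠ w ∧ ∃ u, G.Adj v u ∧ G.Adj u w
  symm := ⟨fun v w h => ⟨h.1.symm, h.2.choose, h.2.choose_spec.2.symm, h.2.choose_spec.1.symm⟩⟩
  loopless := ⟨fun v h => h.1 rfl⟩

/-!
A permutation in `Aut^π(Γ)` carries the common neighbour `u` of two vertices to a common
neighbour of their images (the centre `w` of `π(N(u)) = N(w)`), so it is an automorphism of `Γ²`.
Conversely, in a triangle-free graph without 6-cycles and isolated vertices, the cliques of `Γ²`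
have the Helly property: every nonempty clique of `Γ²` lies in a single neighbourhood `N(u)`.
An automorphism `π` of `Γ²` maps `N(v)` onto a clique of `Γ²`, hence `π(N(v)) ⊆ N(w)`, and
likewise `π⁻¹(N(w)) ⊆ N(v')`; then `N(v) ⊆ N(v')`, which forces equality throughout.
-/

namespace SimpleGraph

variable {V : Type*} {G : SimpleGraph V}

lemma CliqueFree.not_adj_of_adj_of_adj (h : G.CliqueFree 3) {a b c : V}
    (hab : G.Adj a b) (hac : G.Adj a c) : ¬ G.Adj b c := by
  classical
  exact fun hbc => h {a, b, c} (is3Clique_triple_iff.mpr ⟨hab, hac, hbc⟩)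

lemma exists_isCycle_length_six {a b c d e f : V}
    (hab : G.Adj a b) (hbc : G.Adj b c) (hcd : G.Adj c d) (hde : G.Adj d e)
    (hef : G.Adj e f) (hfa : G.Adj f a)
    (hac : a ≠ c) (had : a ≠ d) (hae : a ≠ e) (hbd : b ≠ d) (hbe : b ≠ e)
    (hbf : b ≠ f) (hce : c ≠ e) (hcf : c ≠ f) (hdf : d ≠ f) :
    ∃ (v : V) (p : G.Walk v v), p.IsCycle ∧ p.length = 6 := by
  refine ⟨a, .cons hab (.cons hbc (.cons hcd (.cons hde (.cons hef (.cons hfa .nil))))),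
    ?_, rfl⟩
  have := hab.ne; have := hbc.ne; have := hcd.ne; have := hde.ne; have := hef.ne; have := hfa.ne
  refine ⟨⟨⟨?_⟩, by simp⟩, ?_⟩
  · aesop (add norm simp Walk.edges)
  · aesop (add norm simp Walk.support)

/-- Otherwise `x₁ u₂ y u₁ x₂ c` is a 6-cycle, its vertices being distinct by triangle-freeness. -/
lemma adj_or_adj_or_eq_of_cliqueFree_three (htri : G.CliqueFree 3)
    (hsix : ¬ ∃ (v : V) (p : G.Walk v v), p.IsCycle ∧ p.length = 6)
    {x₁ x₂ y u₁ u₂ c : V} (hu₁x₂ : G.Adj u₁ x₂) (hu₁y : G.Adj u₁ y)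
    (hu₂x₁ : G.Adj u₂ x₁) (hu₂y : G.Adj u₂ y) (hcx₁ : G.Adj c x₁) (hcx₂ : G.Adj c x₂) :
    G.Adj u₁ x₁ ∨ G.Adj u₂ x₂ ∨ u₁ = u₂ := by
  by_contra! ⟨hnu₁x₁, hnu₂x₂, hu₁u₂⟩
  have hx₁x₂ : x₁ ≠ x₂ := by rintro rfl; exact hnu₁x₁ hu₁x₂
  have hx₁y : x₁ ≠ y := by rintro rfl; exact hnu₁x₁ hu₁y
  have hx₂y : x₂ ≠ y := by rintro rfl; exact hnu₂x₂ hu₂y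
  have hx₁u₁ : x₁ ≠ u₁ := by rintro rfl; exact htri.not_adj_of_adj_of_adj hcx₁ hcx₂ hu₁x₂
  have hu₂x₂ : u₂ ≠ x₂ := by rintro rfl; exact htri.not_adj_of_adj_of_adj hcx₂ hcx₁ hu₂x₁
  have hu₂c : u₂ ≠ c := by rintro rfl; exact hnu₂x₂ hcx₂
  have hyc : y ≠ c := by rintro rfl; exact htri.not_adj_of_adj_of_adj hu₁x₂ hu₁y hcx₂.symm
  have hu₁c : u₁ ≠ c := by rintro rfl; exact hnu₁x₁ hcx₁
  exact hsix <| exists_isCycle_length_six hu₂x₁.symm hu₂y hu₁y.symm hu₁x₂ hcx₂.symm hcx₁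
    hx₁y hx₁u₁ hx₁x₂ (Ne.symm hu₁u₂) hu₂x₂ hu₂c hx₂y.symm hyc hu₁c

theorem exists_forall_adj_of_isClique_square (htri : G.CliqueFree 3)
    (hsix : ¬ ∃ (v : V) (p : G.Walk v v), p.IsCycle ∧ p.length = 6)
    (hiso : ∀ x, ∃ y, G.Adj x y) {s : Set V} (hs : s.Finite) (hne : s.Nonempty)
    (hclique : (square G).IsClique s) : ∃ u, ∀ x ∈ s, G.Adj u x := by
  classical
  lift s to Finset V using hs
  induction s using Finset.strongInduction with
  | H s ih =>
  simp only [Finset.coe_nonempty, Finset.mem_coe] at ih hne ⊢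
  rcases Nat.lt_or_ge 2 s.card with hcard | hcard
  · obtain ⟨x₁, x₂, y, hx₁, hx₂, hy, hx₁x₂, hx₁y, hx₂y⟩ := Finset.two_lt_card_iff.mp hcard
    have erase_nonempty {a b : V} (hb : b ∈ s) (hab : b ≠ a) : (s.erase a).Nonempty :=
      ⟨b, Finset.mem_erase.mpr ⟨hab, hb⟩⟩
    have of_erase {u a : V} (ha : a ∈ s) (hua : G.Adj u a) (hu : ∀ x ∈ s.erase a, G.Adj u x) :
        ∃ u, ∀ x ∈ s, G.Adj u x :=
      ⟨u, by rw [← Finset.insert_erase ha, Finset.forall_mem_insert]; exact ⟨hua, hu⟩⟩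
    obtain ⟨u₁, hu₁⟩ := ih _ (Finset.erase_ssubset hx₁) (erase_nonempty hx₂ hx₁x₂.symm)
      (hclique.subset (by simp))
    obtain ⟨u₂, hu₂⟩ := ih _ (Finset.erase_ssubset hx₂) (erase_nonempty hx₁ hx₁x₂)
      (hclique.subset (by simp))
    obtain ⟨-, c, hx₁c, hcx₂⟩ := hclique hx₁ hx₂ hx₁x₂
    have hu₁x₂ := hu₁ x₂ (Finset.mem_erase.mpr ⟨hx₁x₂.symm, hx₂⟩)
    have hu₂x₁ := hu₂ x₁ (Finset.mem_erase.mpr ⟨hx₁x₂, hx₁⟩)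
    rcases adj_or_adj_or_eq_of_cliqueFree_three htri hsix hu₁x₂
      (hu₁ y (Finset.mem_erase.mpr ⟨hx₁y.symm, hy⟩)) hu₂x₁
      (hu₂ y (Finset.mem_erase.mpr ⟨hx₂y.symm, hy⟩)) hx₁c.symm hcx₂ with h | h | rfl
    · exact of_erase hx₁ h hu₁
    · exact of_erase hx₂ h hu₂
    · exact of_erase hx₁ hu₂x₁ hu₁
  · obtain hcard | hcard : s.card = 1 ∨ s.card = 2 := by
      have := hne.card_pos
      omega
    · obtain ⟨x, rfl⟩ := Finset.card_eq_one.mp hcard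
      obtain ⟨y, hxy⟩ := hiso x
      exact ⟨y, by simpa using hxy.symm⟩
    · obtain ⟨x, y, hxy, rfl⟩ := Finset.card_eq_two.mp hcard
      obtain ⟨-, u, hxu, huy⟩ := hclique (by simp) (by simp) hxy
      exact ⟨u, by simpa using ⟨hxu.symm, huy⟩⟩

end SimpleGraph

section TwoFoldProjections

variable {V : Type*} [Fintype V] {G : SimpleGraph V}

lemma square_adj_apply_of_mem_autPi {π : Equiv.Perm V} (hπ : π ∈ autPi G) {v w : V}
    (h : (square G).Adj v w) : (square G).Adj (π v) (π w) := by
  obtain ⟨hvw, u, hvu, huw⟩ := h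
  obtain ⟨u', hu'⟩ := hπ u
  have hv : π v ∈ G.neighborSet u' := hu' ▸ Set.mem_image_of_mem π hvu.symm
  have hw : π w ∈ G.neighborSet u' := hu' ▸ Set.mem_image_of_mem π huw
  exact ⟨π.injective.ne hvw, u', hv.symm, hw⟩

lemma autPi_le_autG_square : autPi G ≤ autG (square G) := by
  intro π hπ v w
  refine ⟨fun h => ?_, square_adj_apply_of_mem_autPi hπ⟩
  simpa using square_adj_apply_of_mem_autPi ((autPi G).inv_mem hπ) h

lemma isClique_square_image_neighborSet {π : Equiv.Perm V} (hπ : π ∈ autG (square G))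
    (v : V) : (square G).IsClique (π '' G.neighborSet v) := by
  rintro _ ⟨x, hx, rfl⟩ _ ⟨y, hy, rfl⟩ hxy
  exact (hπ x y).mpr ⟨fun h => hxy (congrArg π h), v, hx.symm, hy⟩

lemma exists_image_neighborSet_subset (htri : G.CliqueFree 3)
    (hsix : ¬ ∃ (v : V) (p : G.Walk v v), p.IsCycle ∧ p.length = 6)
    (hiso : ∀ x, ∃ y, G.Adj x y) {π : Equiv.Perm V} (hπ : π ∈ autG (square G)) {v : V}
    (hv : (G.neighborSet v).Nonempty) : ∃ w, π '' G.neighborSet v ⊆ G.neighborSet w :=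
  exists_forall_adj_of_isClique_square htri hsix hiso (Set.toFinite _) (hv.image π)
    (isClique_square_image_neighborSet hπ v)

lemma autG_square_le_autPi (htri : G.CliqueFree 3)
    (hsix : ¬ ∃ (v : V) (p : G.Walk v v), p.IsCycle ∧ p.length = 6)
    (hsub : ∀ u v : V, ¬ G.neighborSet u ⊂ G.neighborSet v) :
    autG (square G) ≤ autPi G := by
  intro π hπ v
  rcases (G.neighborSet v).eq_empty_or_nonempty with hv | hv
  · exact ⟨v, by simp [hv]⟩
  have hiso : ∀ x, ∃ y, G.Adj x y := by
    by_contra! ⟨x, hx⟩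
    exact hsub x v (Set.empty_ssubset.mpr hv |>.trans_eq' (by ext y; simp [hx y]))
  obtain ⟨w, hw⟩ := exists_image_neighborSet_subset htri hsix hiso hπ hv
  obtain ⟨v', hv'⟩ := exists_image_neighborSet_subset htri hsix hiso
    ((autG (square G)).inv_mem hπ) ((hv.image π).mono hw)
  have hvv' : G.neighborSet v ⊆ G.neighborSet v' :=
    fun x hx => hv' ⟨π x, hw ⟨x, hx, rfl⟩, by simp⟩
  have heq : G.neighborSet v = G.neighborSet v' := eq_of_le_of_not_lt hvv' (hsub v v')
  exact ⟨w, hw.antisymm fun y hy => ⟨π⁻¹ y, heq ▸ hv' ⟨y, hy, rfl⟩, by simp⟩⟩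

end TwoFoldProjections

theorem stmt_9_general {V : Type*} [Fintype V] (G : SimpleGraph V)
    (htri : G.CliqueFree 3)
    (hsix : ¬ ∃ (v : V) (c : G.Walk v v), c.IsCycle ∧ c.length = 6)
    (hsub : ∀ u v : V, ¬ G.neighborSet u ⊂ G.neighborSet v) :
    autPi G = autG (square G) :=
  autPi_le_autG_square.antisymm (autG_square_le_autPi htri hsix hsub)

/-- If a reduced graph Γ has no triangles, no cycles of length six, and no vertices
u, v with N(u) ⊊ N(v), then Aut^π(Γ) = Aut(Γ²). -/
theorem stmt_9 {V : Type*} [Fintype V] (G : SimpleGraph V) (hred : Reduced G)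
    (htri : G.CliqueFree 3)
    (hsix : ¬ ∃ (v : V) (c : G.Walk v v), c.IsCycle ∧ c.length = 6)
    (hsub : ∀ u v : V, ¬ G.neighborSet u ⊂ G.neighborSet v) :
    autPi G = autG (square G) :=
  stmt_9_general G htri hsix hsub
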